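/- Let u(m) = 2 + m² + m√(4+m²) and g(m) = (1/(2m))·(3·2^{2/3}·u(m)^{1/3} + 6·2^{1/3}·u(m)^{−1/3} − 10) for m > 0. Then g is strictly decreasing on the interval (0, 4], g(m) > 1 for all m ∈ (0, 4), and g(4) = 1. -/

import Mathlib

/-- `u(m) = 2 + m² + m√(4 + m²)`. -/
noncomputable def u (m : ℝ) : ℝ := 2 + m ^ 2 + m * Real.sqrt (4 + m ^ 2)

/-- `g(m) = (1/(2m))·(3·2^{2/3}·u(m)^{1/3} + 6·2^{1/3}·u(m)^{−1/3} − 10)`, the unique real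
root in `n` of the cubic `P(m,n) = m³n³ + 15m²n² + 48mn − 27m² − 64`. -/
noncomputable def g (m : ℝ) : ℝ :=
  (1 / (2 * m)) * (3 * 2 ^ ((2 : ℝ) / 3) * u m ^ ((1 : ℝ) / 3)
    + 6 * 2 ^ ((1 : ℝ) / 3) * (u m ^ ((1 : ℝ) / 3))⁻¹ - 10)

/-!
The substitution `m = s³ + 3s` (a bijection of `ℝ`) removes the radicals from `g`. Since
`(s³ + 3s)² + 4 = (s² + 1)²(s² + 4)`, one gets `u(s³ + 3s) = u(s)³ / 4`, so the cube root of
`u(s³ + 3s)` is `u(s)` up to a power of `2`; and `u(s)` is a root of `X² - (2s² + 4)X + 4`,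
so `u(s) + 4 / u(s) = 2s² + 4`. Together, `g(s³ + 3s) = (3s² + 1) / (s³ + 3s)`, and this
rational function is strictly decreasing for `s > 0`. Taking `s = 1` gives `g 4 = 1`.
-/

open Real Set

theorem u_pos (s : ℝ) : 0 < u s := by
  have hr := sq_sqrt (by positivity : (0 : ℝ) ≤ 4 + s ^ 2)
  have := sqrt_nonneg (4 + s ^ 2)
  unfold u
  nlinarith [sq_nonneg (s + sqrt (4 + s ^ 2)), sq_nonneg (s - sqrt (4 + s ^ 2))]

theorem u_sq_sub_mul_add_four (s : ℝ) : u s ^ 2 - (2 * s ^ 2 + 4) * u s + 4 = 0 := by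
  have hr := sq_sqrt (by positivity : (0 : ℝ) ≤ 4 + s ^ 2)
  unfold u
  linear_combination s ^ 2 * hr

theorem u_cube_add_three_mul (s : ℝ) : u (s ^ 3 + 3 * s) = u s ^ 3 / 4 := by
  set r := sqrt (4 + s ^ 2) with hr_def
  have hr : r ^ 2 = 4 + s ^ 2 := sq_sqrt (by positivity)
  have hsqrt : sqrt (4 + (s ^ 3 + 3 * s) ^ 2) = (s ^ 2 + 1) * r := by
    rw [← sqrt_sq (by positivity : 0 ≤ (s ^ 2 + 1) * r)]
    congr 1
    linear_combination -(s ^ 2 + 1) ^ 2 * hr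
  unfold u
  rw [hsqrt, ← hr_def]
  linear_combination -(3 * (2 + s ^ 2) * s ^ 2 + s ^ 3 * r) / 4 * hr

theorem rpow_one_third_pow_three {x : ℝ} (hx : 0 ≤ x) : (x ^ ((1 : ℝ) / 3)) ^ 3 = x := by
  rw [← rpow_natCast, ← rpow_mul hx]
  norm_num

theorem g_cube_add_three_mul (s : ℝ) : g (s ^ 3 + 3 * s) = (3 * s ^ 2 + 1) / (s ^ 3 + 3 * s) := by
  set c : ℝ := 2 ^ ((1 : ℝ) / 3)
  set k : ℝ := u (s ^ 3 + 3 * s) ^ ((1 : ℝ) / 3)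
  have hc : 0 < c := by positivity
  have hk : 0 < k := rpow_pos_of_pos (u_pos _) _
  have hc2 : (2 : ℝ) ^ ((2 : ℝ) / 3) = c ^ 2 := by
    rw [← rpow_natCast, ← rpow_mul (by norm_num)]
    norm_num
  have hck : c ^ 2 * k = u s := by
    refine (pow_left_inj₀ (by positivity) (u_pos s).le (by norm_num : 3 ≠ 0)).1 ?_
    rw [mul_pow, ← pow_mul, mul_comm 2 3, pow_mul, rpow_one_third_pow_three zero_le_two,
      rpow_one_third_pow_three (u_pos _).le, u_cube_add_three_mul]
    ring
  have hus := (u_pos s).ne'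
  have hinv : c * k⁻¹ = 2 / u s := by
    rw [← hck]
    field_simp
    exact rpow_one_third_pow_three zero_le_two
  have hbracket : 3 * c ^ 2 * k + 6 * c * k⁻¹ - 10 = 2 * (3 * s ^ 2 + 1) := by
    rw [mul_assoc 6, hinv, mul_assoc 3, hck]
    field_simp
    linear_combination 3 * u_sq_sub_mul_add_four s
  rw [g, hc2, hbracket]
  generalize s ^ 3 + 3 * s = m
  ring

theorem strictMono_cube_add_three_mul : StrictMono fun s : ℝ => s ^ 3 + 3 * s :=
  (Odd.strictMono_pow (by decide)).add (strictMono_id.const_mul (by norm_num))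

theorem surjective_cube_add_three_mul : Function.Surjective fun s : ℝ => s ^ 3 + 3 * s := by
  intro m
  have hcont : ContinuousOn (fun s : ℝ => s ^ 3 + 3 * s) (Icc (-|m|) |m|) := by fun_prop
  have h0 := abs_nonneg m
  have h3 := pow_nonneg h0 3
  obtain ⟨s, -, hs⟩ := intermediate_value_Icc (neg_le_self h0) hcont
    (show m ∈ Icc _ _ from ⟨by nlinarith [neg_abs_le m], by nlinarith [le_abs_self m]⟩)
  exact ⟨s, hs⟩

theorem strictAntiOn_div_cube_add_three_mul :
    StrictAntiOn (fun s : ℝ => (3 * s ^ 2 + 1) / (s ^ 3 + 3 * s)) (Ioi 0) := by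
  intro s (hs : 0 < s) t (ht : 0 < t) hst
  rw [div_lt_div_iff₀ (by positivity) (by positivity), ← sub_pos]
  have hts : 0 < t - s := sub_pos.2 hst
  calc (0 : ℝ) < (t - s) * (3 * (s * t - 1) ^ 2 + (t - s) ^ 2) := by positivity
    _ = _ := by ring

theorem g_strictAntiOn : StrictAntiOn g (Ioi 0) := by
  intro a (ha : 0 < a) b _ hab
  obtain ⟨s, rfl⟩ := surjective_cube_add_three_mul a
  obtain ⟨t, rfl⟩ := surjective_cube_add_three_mul b
  have hs : 0 < s := strictMono_cube_add_three_mul.lt_iff_lt.1 (by simpa using ha)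
  have hst : s < t := strictMono_cube_add_three_mul.lt_iff_lt.1 hab
  simp only [g_cube_add_three_mul]
  exact strictAntiOn_div_cube_add_three_mul hs (hs.trans hst) hst

theorem g_four : g 4 = 1 := by
  have := g_cube_add_three_mul 1
  norm_num at this
  exact this

/-- `g` is strictly decreasing on `(0, 4]`, is `> 1` on `(0, 4)`, and `g(4) = 1`. -/
theorem g_strictAntiOn_gt_one_and_g_four :
    StrictAntiOn g (Set.Ioc 0 4) ∧ (∀ m : ℝ, 0 < m → m < 4 → 1 < g m) ∧ g 4 = 1 := by
  refine ⟨g_strictAntiOn.mono Ioc_subset_Ioi_self, fun m hm0 hm4 => ?_, g_four⟩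
  simpa [g_four] using g_strictAntiOn hm0 (by norm_num : (0 : ℝ) < 4) hm4
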